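/- (No heavy triangle, K₁₂ case.) For all γ, β > 0 there exist ε > 0, δ > 0 and n₀ such that the following holds for all n ≥ n₀. Let G be a graph on n vertices with independence number α(G) ≤ δ·Q(4,n), and let V₁, V₂, V₃ be pairwise disjoint vertex sets of equal size at least β·n such that each of the three pairs (V_i, V_j), i ≠ j, is ε-regular with edge density d(V_i, V_j) ≥ 3/4 + γ. Then G contains a clique on 12 vertices. -/

import Mathlib

open Finset

/-- The independence number of a graph: the largest size of an independent set of vertices. -/
noncomputable def indepNum {V : Type*} (G : SimpleGraph V) : ℕ :=
  sSup {k | ∃ s : Finset V, (∀ v ∈ s, ∀ w ∈ s, v ≠ w → ¬ G.Adj v w) ∧ s.card = k}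

/-- The inverse Ramsey number `Q t n`: the minimum independence number over all
`K_t`-free graphs on `n` vertices. -/
noncomputable def Qinv (t n : ℕ) : ℕ :=
  sInf {a | ∃ G : SimpleGraph (Fin n), G.CliqueFree t ∧ indepNum G = a}

/-- The edge density between two finite vertex sets, as a real number. -/
noncomputable def density {V : Type*} (G : SimpleGraph V) (A B : Finset V) : ℝ :=
  by classical exact (G.edgeDensity A B : ℝ)

/-- The pair `(A, B)` is `ε`-regular: all subpairs `(A', B')` with `|A'| ≥ ε|A|`,
`|B'| ≥ ε|B|` have density within `ε` of `d(A,B)`. -/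
def IsRegularPair {V : Type*} (G : SimpleGraph V) (ε : ℝ) (A B : Finset V) : Prop :=
  ∀ A' ⊆ A, ∀ B' ⊆ B, ε * A.card ≤ A'.card → ε * B.card ≤ B'.card →
    |density G A' B' - density G A B| ≤ ε

/-!
Disjoint copies of an extremal graph show `Q(t, k m) ≤ k Q(t, m)`, and `Q(t, ·)` is monotone.
Hence if `(k + 1) α(G) ≤ Q(4, n)`, every vertex set `S` with `n ≤ k |S|` spans a `K₄`: otherwise
`G[S]` would give `Q(4, |S|) ≤ α(G)` and so `Q(4, n) ≤ k α(G)`. With `k = ⌈1 / (γ² β)⌉` this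
applies to every `S` with `|S| ≥ γ² |V₁|`.

By `ε`-regularity with `ε = γ/4`, all but `ε |V_i|` vertices of `V_i` have at least
`(3/4 + 3γ/4) |U|` neighbours in any `U ⊆ V_j` with `|U| ≥ ε |V_j|`, so four such vertices have
at least `3γ |U|` common neighbours in `U`. Take a `K₄` of such vertices in `V₁`, then a `K₄` of
such vertices among its common neighbours in `V₂`, then a `K₄` among the common neighbours of all
eight in `V₃`; the sets involved never drop below `γ² |V₁|`, and the three `K₄`s form a `K₁₂`.
-/

namespace SimpleGraph

variable {V W : Type*}

lemma CliqueFree.of_hom {G : SimpleGraph V} {H : SimpleGraph W} {n : ℕ} (f : G →g H)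
    (h : H.CliqueFree n) : G.CliqueFree n := by
  classical
  intro s hs
  refine h (s.image f) ⟨?_, ?_⟩
  · rw [Finset.coe_image]
    rintro _ ⟨v, hv, rfl⟩ _ ⟨w, hw, rfl⟩ hne
    exact f.map_adj (hs.isClique hv hw (ne_of_apply_ne f hne))
  · rw [Finset.card_image_of_injOn, hs.card_eq]
    intro v hv w hw hvw
    by_contra hne
    exact H.loopless.irrefl _ (hvw ▸ f.map_adj (hs.isClique hv hw hne))

/-- `⊥ □ H` is a disjoint union of copies of `H`, one for each vertex of `V`. -/
def botBoxProdSnd (H : SimpleGraph W) : (⊥ : SimpleGraph V).boxProd H →g H where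
  toFun := Prod.snd
  map_rel' h := by
    simp only [boxProd_adj, bot_adj, false_and, false_or] at h
    exact h.1

lemma indepNum_bot_boxProd_le [Fintype V] [Finite W] (H : SimpleGraph W) :
    ((⊥ : SimpleGraph V).boxProd H).indepNum ≤ Fintype.card V * H.indepNum := by
  classical
  obtain ⟨s, hs, hcard⟩ := ((⊥ : SimpleGraph V).boxProd H).exists_isNIndepSet_indepNum
  rw [← hcard, Finset.card_eq_sum_card_fiberwise (f := Prod.fst) (t := Finset.univ)
    (fun _ _ => Finset.mem_univ _)]
  refine Finset.sum_le_card_nsmul _ _ _ fun i _ => ?_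
  have hinj : Set.InjOn Prod.snd (({x ∈ s | x.1 = i} : Finset (V × W)) : Set (V × W)) := by
    intro x hx y hy hxy
    simp only [Finset.coe_filter] at hx hy
    exact Prod.ext (hx.2.trans hy.2.symm) hxy
  rw [← Finset.card_image_of_injOn hinj]
  refine IsIndepSet.card_le_indepNum ?_
  simp only [Finset.coe_image, Finset.coe_filter]
  rintro _ ⟨x, ⟨hx, hxi⟩, rfl⟩ _ ⟨y, ⟨hy, hyi⟩, rfl⟩ hne hadj
  exact hs hx hy (ne_of_apply_ne Prod.snd hne) (boxProd_adj.2 (Or.inr ⟨hadj, hxi.trans hyi.symm⟩))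

end SimpleGraph

section IndependenceNumber

variable {V W : Type*}

lemma indepNum_eq_simpleGraph_indepNum (G : SimpleGraph V) : indepNum G = G.indepNum := by
  simp only [indepNum, SimpleGraph.indepNum, SimpleGraph.isNIndepSet_iff,
    SimpleGraph.IsIndepSet, Set.Pairwise, Finset.mem_coe]

lemma indepNum_comap_le [Finite W] (G : SimpleGraph W) (f : V ↪ W) :
    indepNum (G.comap f) ≤ indepNum G := by
  simp only [indepNum_eq_simpleGraph_indepNum]
  obtain ⟨s, hs, hcard⟩ := (G.comap f).exists_isNIndepSet_indepNum
  rw [← hcard, ← s.card_map f]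
  refine SimpleGraph.IsIndepSet.card_le_indepNum ?_
  rw [Finset.coe_map]
  rintro _ ⟨v, hv, rfl⟩ _ ⟨w, hw, rfl⟩ hne
  exact hs hv hw (ne_of_apply_ne f hne)

lemma one_le_indepNum [Finite V] [Nonempty V] (G : SimpleGraph V) : 1 ≤ indepNum G := by
  rw [indepNum_eq_simpleGraph_indepNum]
  obtain ⟨v⟩ := ‹Nonempty V›
  have hv : G.IsIndepSet ({v} : Finset V) := by simp [SimpleGraph.isIndepSet_iff]
  simpa using hv.card_le_indepNum

end IndependenceNumber

section InverseRamsey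

variable {t : ℕ}

lemma exists_cliqueFree_indepNum_eq_Qinv (ht : 2 ≤ t) (n : ℕ) :
    ∃ G : SimpleGraph (Fin n), G.CliqueFree t ∧ indepNum G = Qinv t n :=
  Nat.sInf_mem (s := {a | ∃ G : SimpleGraph (Fin n), G.CliqueFree t ∧ indepNum G = a})
    ⟨_, ⊥, SimpleGraph.cliqueFree_bot ht, rfl⟩

lemma Qinv_le_indepNum {V : Type*} [Fintype V] {G : SimpleGraph V} (hG : G.CliqueFree t) :
    Qinv t (Fintype.card V) ≤ indepNum G := by
  let e := (Fintype.equivFin V).symm.toEmbedding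
  calc Qinv t (Fintype.card V) ≤ indepNum (G.comap e) :=
        Nat.sInf_le (s := {a | ∃ G : SimpleGraph (Fin _), G.CliqueFree t ∧ indepNum G = a})
          ⟨G.comap e, hG.comap (SimpleGraph.Embedding.comap e G).isContained, rfl⟩
    _ ≤ indepNum G := indepNum_comap_le G e

lemma Qinv_mono (ht : 2 ≤ t) {m n : ℕ} (h : m ≤ n) : Qinv t m ≤ Qinv t n := by
  obtain ⟨G, hG, hα⟩ := exists_cliqueFree_indepNum_eq_Qinv ht n
  let e := Fin.castLEEmb h
  have := Qinv_le_indepNum (hG.comap (SimpleGraph.Embedding.comap e G).isContained)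
  rw [Fintype.card_fin] at this
  exact this.trans (hα ▸ indepNum_comap_le G e)

lemma Qinv_mul_le (ht : 2 ≤ t) (k m : ℕ) : Qinv t (k * m) ≤ k * Qinv t m := by
  obtain ⟨H, hH, hα⟩ := exists_cliqueFree_indepNum_eq_Qinv ht m
  have := Qinv_le_indepNum (hH.of_hom (SimpleGraph.botBoxProdSnd (V := Fin k) H))
  simp only [Fintype.card_prod, Fintype.card_fin] at this
  refine this.trans ?_
  rw [← hα, indepNum_eq_simpleGraph_indepNum, indepNum_eq_simpleGraph_indepNum]
  simpa using SimpleGraph.indepNum_bot_boxProd_le (V := Fin k) H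

end InverseRamsey

section CliquesInLargeSets

variable {V : Type*} [Fintype V] {G : SimpleGraph V} {t : ℕ}

lemma Qinv_card_le_indepNum_of_cliqueFreeOn {S : Finset V} (hS : G.CliqueFreeOn S t) :
    Qinv t #S ≤ indepNum G := by
  have hfree : (G.induce (S : Set V)).CliqueFree t := fun s hs =>
    hS (Finset.map_subtype_subset s) ((hs.map (f := Function.Embedding.subtype _)).mono
      (SimpleGraph.map_comap_le _ G))
  have := Qinv_le_indepNum hfree
  simp only [Finset.coe_sort_coe, Fintype.card_coe] at this
  exact this.trans (indepNum_comap_le G _)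

lemma exists_isNClique_subset_of_mul_indepNum_le [Nonempty V] {k : ℕ} (ht : 2 ≤ t)
    (hα : (k + 1) * indepNum G ≤ Qinv t (Fintype.card V)) {S : Finset V}
    (hS : Fintype.card V ≤ k * #S) : ∃ s ⊆ S, G.IsNClique t s := by
  by_contra! h
  have hQS := Qinv_card_le_indepNum_of_cliqueFreeOn (G := G) (t := t) (S := S)
    fun s hs => h s (Finset.coe_subset.1 hs)
  have hQ : Qinv t (Fintype.card V) ≤ k * indepNum G :=
    (Qinv_mono ht hS).trans ((Qinv_mul_le ht k #S).trans (Nat.mul_le_mul_left k hQS))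
  have := one_le_indepNum G
  rw [add_one_mul] at hα
  omega

end CliquesInLargeSets

section Regularity

variable {V : Type*} (G : SimpleGraph V) [DecidableRel G.Adj]

lemma density_eq_edgeDensity (A B : Finset V) : density G A B = G.edgeDensity A B := by
  unfold density
  congr

lemma density_le_one (A B : Finset V) : density G A B ≤ 1 := by
  rw [density_eq_edgeDensity]
  exact_mod_cast G.edgeDensity_le_one A B

lemma density_mul_card_mul_card (A B : Finset V) :
    density G A B * (#A * #B) = ∑ v ∈ A, (#{w ∈ B | G.Adj v w} : ℝ) := by
  have hcard : #(G.interedges A B) = ∑ v ∈ A, #{w ∈ B | G.Adj v w} := by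
    simp only [SimpleGraph.interedges_def, card_filter, sum_product]
  rw [density_eq_edgeDensity, SimpleGraph.edgeDensity_def]
  push_cast
  rcases eq_or_ne ((#A : ℝ) * #B) 0 with h | h
  · rcases mul_eq_zero.1 h with h | h <;> simp_all
  · rw [div_mul_cancel₀ _ h]
    exact_mod_cast hcard

lemma card_filter_lt_of_isRegularPair {ε : ℝ} (hε : 0 < ε) {A B U : Finset V}
    (hreg : IsRegularPair G ε A B) (hA : A.Nonempty) (hUB : U ⊆ B) (hU : ε * #B ≤ #U) :
    (#{v ∈ A | #{w ∈ U | G.Adj v w} < (density G A B - ε) * #U} : ℝ) < ε * #A := by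
  set X := {v ∈ A | #{w ∈ U | G.Adj v w} < (density G A B - ε) * #U}
  by_contra! hX
  have hXne : X.Nonempty := by
    have : (0 : ℝ) < #X := (mul_pos hε (by exact_mod_cast hA.card_pos)).trans_le hX
    exact card_pos.1 (by exact_mod_cast this)
  have hlow : density G A B - ε ≤ density G X U := by
    linarith [(abs_le.1 (hreg X (filter_subset _ _) U hUB hX hU)).1]
  have hsum : ∑ v ∈ X, (#{w ∈ U | G.Adj v w} : ℝ) < ∑ v ∈ X, (density G A B - ε) * #U :=
    sum_lt_sum_of_nonempty hXne fun v hv => (mem_filter.1 hv).2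
  rw [sum_const, nsmul_eq_mul, ← density_mul_card_mul_card] at hsum
  have := mul_le_mul_of_nonneg_right hlow (by positivity : (0 : ℝ) ≤ #X * #U)
  linarith

lemma card_sub_lt_card_filter_le_degree {ε : ℝ} (hε : 0 < ε) {A B U S : Finset V}
    (hreg : IsRegularPair G ε A B) (hA : A.Nonempty) (hUB : U ⊆ B) (hU : ε * #B ≤ #U)
    (hSA : S ⊆ A) :
    (#S : ℝ) - ε * #A < #{v ∈ S | (density G A B - ε) * #U ≤ #{w ∈ U | G.Adj v w}} := by
  have hsplit := card_filter_add_card_filter_not (s := S)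
    fun v => (density G A B - ε) * #U ≤ #{w ∈ U | G.Adj v w}
  have hbad : #{v ∈ S | ¬(density G A B - ε) * #U ≤ #{w ∈ U | G.Adj v w}} ≤
      #{v ∈ A | #{w ∈ U | G.Adj v w} < (density G A B - ε) * #U} :=
    card_le_card fun v hv => by
      simp only [mem_filter, not_le] at hv ⊢
      exact ⟨hSA hv.1, hv.2⟩
  have hsplit' : ((_ + _ : ℕ) : ℝ) = #S := congrArg _ hsplit
  have hbad' : ((_ : ℕ) : ℝ) ≤ _ := Nat.cast_le.2 hbad
  push_cast at hsplit'
  linarith [card_filter_lt_of_isRegularPair G hε hreg hA hUB hU]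

end Regularity

section CommonNeighbours

variable {V : Type*} (G : SimpleGraph V) [DecidableRel G.Adj]

def commonNbrs (t U : Finset V) : Finset V := {w ∈ U | ∀ v ∈ t, G.Adj v w}

lemma commonNbrs_subset (t U : Finset V) : commonNbrs G t U ⊆ U := filter_subset _ _

lemma adj_of_mem_commonNbrs {t U : Finset V} {v w : V} (hw : w ∈ commonNbrs G t U) (hv : v ∈ t) :
    G.Adj v w :=
  (mem_filter.1 hw).2 v hv

lemma card_sub_le_card_commonNbrs {t U : Finset V} {D : ℝ}
    (hD : ∀ v ∈ t, D ≤ #{w ∈ U | G.Adj v w}) :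
    (#U : ℝ) - #t * (#U - D) ≤ #(commonNbrs G t U) := by
  classical
  have hcover : U ⊆ commonNbrs G t U ∪ t.biUnion fun v => {w ∈ U | ¬G.Adj v w} := by
    intro w hw
    by_cases h : ∀ v ∈ t, G.Adj v w
    · exact mem_union_left _ (mem_filter.2 ⟨hw, h⟩)
    · push Not at h
      obtain ⟨v, hv, hvw⟩ := h
      exact mem_union_right _ (mem_biUnion.2 ⟨v, hv, mem_filter.2 ⟨hw, hvw⟩⟩)
  have hmiss : ∀ v ∈ t, (#{w ∈ U | ¬G.Adj v w} : ℝ) ≤ #U - D := by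
    intro v hv
    have hsplit : ((_ + _ : ℕ) : ℝ) = #U :=
      congrArg _ (card_filter_add_card_filter_not (s := U) (G.Adj v))
    push_cast at hsplit
    linarith [hD v hv]
  have hcard := (card_le_card hcover).trans
    ((card_union_le _ _).trans (Nat.add_le_add_left card_biUnion_le _))
  have hcard' : (#U : ℝ) ≤ #(commonNbrs G t U) + ∑ v ∈ t, (#{w ∈ U | ¬G.Adj v w} : ℝ) := by
    exact_mod_cast hcard
  have hsum := sum_le_sum hmiss
  rw [sum_const, nsmul_eq_mul] at hsum
  linarith

lemma three_mul_card_le_card_commonNbrs {γ d : ℝ} (hd : 3 / 4 + γ ≤ d) {t U : Finset V}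
    (ht : #t = 4) (hdeg : ∀ v ∈ t, (d - γ / 4) * #U ≤ #{w ∈ U | G.Adj v w}) :
    3 * γ * #U ≤ #(commonNbrs G t U) := by
  have := card_sub_le_card_commonNbrs G hdeg
  rw [ht] at this
  push_cast at this
  nlinarith [mul_le_mul_of_nonneg_right hd (Nat.cast_nonneg (α := ℝ) #U)]

end CommonNeighbours

lemma SimpleGraph.IsNClique.union_of_forall_adj {V : Type*} [DecidableEq V] {G : SimpleGraph V}
    {m n : ℕ} {s t : Finset V} (hs : G.IsNClique m s) (ht : G.IsNClique n t)
    (hst : ∀ v ∈ s, ∀ w ∈ t, G.Adj v w) : G.IsNClique (m + n) (s ∪ t) := by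
  have := G.symm
  refine ⟨?_, ?_⟩
  · rw [coe_union, SimpleGraph.IsClique, Set.pairwise_union_of_symm]
    exact ⟨hs.isClique, ht.isClique, fun v hv w hw _ => hst v hv w hw⟩
  · rw [card_union_of_disjoint, hs.card_eq, ht.card_eq]
    exact Finset.disjoint_left.2 fun _ hvs hvt => G.loopless.irrefl _ (hst _ hvs _ hvt)

section HeavyTriangle

variable {V : Type*} (G : SimpleGraph V) [DecidableRel G.Adj]

lemma exists_isNClique_four_three_mul_card_le_card_commonNbrs {γ m : ℝ} (hγ : 0 < γ)
    (hK4 : ∀ S : Finset V, m ≤ #S → ∃ t ⊆ S, G.IsNClique 4 t) {A B U S : Finset V}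
    (hreg : IsRegularPair G (γ / 4) A B) (hd : 3 / 4 + γ ≤ density G A B) (hA : A.Nonempty)
    (hUB : U ⊆ B) (hU : γ / 4 * #B ≤ #U) (hSA : S ⊆ A) (hS : m + γ / 4 * #A ≤ #S) :
    ∃ t ⊆ S, G.IsNClique 4 t ∧ 3 * γ * #U ≤ #(commonNbrs G t U) := by
  have hgood := card_sub_lt_card_filter_le_degree G (by positivity) hreg hA hUB hU hSA
  obtain ⟨t, ht, htc⟩ := hK4 _ (le_of_lt (lt_of_le_of_lt (by linarith) hgood))
  exact ⟨t, ht.trans (filter_subset _ _), htc,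
    three_mul_card_le_card_commonNbrs G hd htc.card_eq fun _ hv => (mem_filter.1 (ht hv)).2⟩

theorem not_cliqueFree_twelve_of_regular_triangle [DecidableEq V] {γ : ℝ} (hγ : 0 < γ)
    {V₁ V₂ V₃ : Finset V} (h12 : #V₁ = #V₂) (h23 : #V₂ = #V₃)
    (hr12 : IsRegularPair G (γ / 4) V₁ V₂) (hr13 : IsRegularPair G (γ / 4) V₁ V₃)
    (hr23 : IsRegularPair G (γ / 4) V₂ V₃) (hd12 : 3 / 4 + γ ≤ density G V₁ V₂)
    (hd13 : 3 / 4 + γ ≤ density G V₁ V₃) (hd23 : 3 / 4 + γ ≤ density G V₂ V₃)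
    (hK4 : ∀ S : Finset V, γ ^ 2 * #V₁ ≤ #S → ∃ t ⊆ S, G.IsNClique 4 t) :
    ¬ G.CliqueFree 12 := by
  have hγ4 : γ ≤ 1 / 4 := by linarith [density_le_one G V₁ V₂]
  have ha : (0 : ℝ) ≤ #V₁ := Nat.cast_nonneg _
  have ha2 : (#V₂ : ℝ) = #V₁ := by rw [h12]
  have ha3 : (#V₃ : ℝ) = #V₁ := by rw [h12, h23]
  have hγa : γ * #V₁ ≤ 1 / 4 * #V₁ := mul_le_mul_of_nonneg_right hγ4 ha
  have hγ2a : γ ^ 2 * #V₁ ≤ γ / 4 * #V₁ := mul_le_mul_of_nonneg_right (by nlinarith) ha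
  have hγa0 : 0 ≤ γ * #V₁ := mul_nonneg hγ.le ha
  have hV₁ : V₁.Nonempty := by
    obtain ⟨t, ht, htc⟩ := hK4 V₁ (by linarith)
    exact (card_pos.1 (by rw [htc.card_eq]; norm_num)).mono ht
  have hV₂ : V₂.Nonempty := card_pos.1 (h12 ▸ hV₁.card_pos)
  set S₁ := {v ∈ V₁ | (density G V₁ V₂ - γ / 4) * #V₂ ≤ #{w ∈ V₂ | G.Adj v w}}
  have hS₁ : (#V₁ : ℝ) - γ / 4 * #V₁ < #S₁ := card_sub_lt_card_filter_le_degree G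
    (by positivity) hr12 hV₁ subset_rfl (by rw [ha2]; linarith) subset_rfl
  obtain ⟨t₁, ht₁, ht₁c, hU₃⟩ := exists_isNClique_four_three_mul_card_le_card_commonNbrs G hγ
    hK4 hr13 hd13 hV₁ subset_rfl (by rw [ha3]; linarith) (filter_subset _ _ : S₁ ⊆ V₁)
    (by linarith)
  have hU₂ := three_mul_card_le_card_commonNbrs G hd12 ht₁c.card_eq
    fun _ hv => (mem_filter.1 (ht₁ hv)).2
  rw [ha2] at hU₂
  rw [ha3] at hU₃
  obtain ⟨t₂, ht₂, ht₂c, hW₃⟩ := exists_isNClique_four_three_mul_card_le_card_commonNbrs G hγ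
    hK4 hr23 hd23 hV₂ (commonNbrs_subset G t₁ V₃) (by rw [ha3]; linarith)
    (commonNbrs_subset G t₁ V₂) (by rw [ha2]; linarith)
  obtain ⟨t₃, ht₃, ht₃c⟩ := hK4 (commonNbrs G t₂ (commonNbrs G t₁ V₃)) (by nlinarith)
  refine ((ht₁c.union_of_forall_adj ht₂c ?_).union_of_forall_adj ht₃c ?_).not_cliqueFree
  · exact fun u hu w hw => adj_of_mem_commonNbrs G (ht₂ hw) hu
  · intro u hu w hw
    rcases mem_union.1 hu with hu | hu
    · exact adj_of_mem_commonNbrs G (commonNbrs_subset G t₂ _ (ht₃ hw)) hu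
    · exact adj_of_mem_commonNbrs G (ht₃ hw) hu

end HeavyTriangle

theorem no_heavy_triangle_K12 (γ β : ℝ) (hγ : 0 < γ) (hβ : 0 < β) :
    ∃ ε : ℝ, 0 < ε ∧ ∃ δ : ℝ, 0 < δ ∧ ∃ n₀ : ℕ, ∀ n : ℕ, n₀ ≤ n →
      ∀ G : SimpleGraph (Fin n),
        (indepNum G : ℝ) ≤ δ * Qinv 4 n →
        ∀ V₁ V₂ V₃ : Finset (Fin n),
          Disjoint V₁ V₂ → Disjoint V₁ V₃ → Disjoint V₂ V₃ →
          V₁.card = V₂.card → V₂.card = V₃.card →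
          β * n ≤ (V₁.card : ℝ) →
          IsRegularPair G ε V₁ V₂ → IsRegularPair G ε V₁ V₃ → IsRegularPair G ε V₂ V₃ →
          3 / 4 + γ ≤ density G V₁ V₂ → 3 / 4 + γ ≤ density G V₁ V₃ →
          3 / 4 + γ ≤ density G V₂ V₃ →
          ¬ G.CliqueFree 12 := by
  classical
  set k := ⌈(γ ^ 2 * β)⁻¹⌉₊
  refine ⟨γ / 4, by positivity, 1 / (k + 1), by positivity, 1, ?_⟩
  intro n hn G hα V₁ V₂ V₃ _ _ _ h12 h23 hβn hr12 hr13 hr23 hd12 hd13 hd23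
  have : Nonempty (Fin n) := ⟨⟨0, hn⟩⟩
  have hα' : (k + 1) * indepNum G ≤ Qinv 4 (Fintype.card (Fin n)) := by
    rw [Fintype.card_fin]
    rw [one_div_mul_eq_div, le_div_iff₀ (by positivity)] at hα
    exact_mod_cast (mul_comm _ _).trans_le hα
  refine not_cliqueFree_twelve_of_regular_triangle G hγ h12 h23 hr12 hr13 hr23 hd12 hd13 hd23
    fun S hS => exists_isNClique_subset_of_mul_indepNum_le (by norm_num) hα' ?_
  have hc : 0 < γ ^ 2 * β := by positivity
  have hnS : (γ ^ 2 * β) * n ≤ #S := by nlinarith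
  have : (n : ℝ) ≤ k * #S := calc
    (n : ℝ) ≤ (γ ^ 2 * β)⁻¹ * #S := by rwa [le_inv_mul_iff₀ hc]
    _ ≤ k * #S := by gcongr; exact Nat.le_ceil _
  rw [Fintype.card_fin]
  exact_mod_cast this
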